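/- arXiv:2203.00705 — 3 statements merged into one kernel-verified Lean document; each statement's English description precedes it below -/
import Mathlib

section
/- Every differential F-embedding σ : F_∞ → F_∞ of the complete Picard–Vessiot closure into itself is surjective, hence an automorphism. -/
/-- A derivation on a field, given as a bare function. -/
structure IsDeriv {K : Type*} [Field K] (d : K → K) : Prop where
  map_add : ∀ a b : K, d (a + b) = d a + d b
  leibniz : ∀ a b : K, d (a * b) = a * d b + d a * b

variable {K : Type*} [Field K]

/-- A subfield is a differential subfield if it is stable under the derivation. -/
def DStable (d : K → K) (E : Subfield K) : Prop := ∀ x ∈ E, d x ∈ E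

/-- `y` is a solution of the monic linear homogeneous ODE
`Y⁽ⁿ⁾ + a_{n-1} Y⁽ⁿ⁻¹⁾ + ⋯ + a_0 Y = 0`. -/
def IsSol (d : K → K) {n : ℕ} (a : Fin n → K) (y : K) : Prop :=
  d^[n] y + ∑ i : Fin n, a i * d^[(i : ℕ)] y = 0

/-- The family `v` is linearly independent over the constants. -/
def LinIndepConst (d : K → K) {n : ℕ} (v : Fin n → K) : Prop :=
  ∀ c : Fin n → K, (∀ i, d (c i) = 0) → ∑ i, c i * v i = 0 → ∀ i, c i = 0

/-- The ODE with coefficients `a` has a full set of solutions inside `T`. -/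
def FullSolutionsIn (d : K → K) {n : ℕ} (a : Fin n → K) (T : Set K) : Prop :=
  ∃ v : Fin n → K, (∀ i, v i ∈ T) ∧ (∀ i, IsSol d a (v i)) ∧ LinIndepConst d v

/-- The (differential) subfield generated by a set: the subfield generated by the
set together with all of its iterated derivatives. -/
def DiffGen (d : K → K) (A : Set K) : Subfield K :=
  Subfield.closure (⋃ k, d^[k] '' A)

/-- `M` is a Picard–Vessiot extension of `E` (for some monic linear operator `L`):
no new constants, and `M` is generated over `E` by a full set of solutions of `L`. -/
def IsPV (d : K → K) (E M : Subfield K) : Prop :=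
  E ≤ M ∧ (∀ x ∈ M, d x = 0 → x ∈ E) ∧
  ∃ (n : ℕ) (a v : Fin n → K), (∀ i, a i ∈ E) ∧ (∀ i, v i ∈ M) ∧
    (∀ i, IsSol d a (v i)) ∧ LinIndepConst d v ∧
    M ≤ DiffGen d (↑E ∪ Set.range v)

/-- `E` is an iterated Picard–Vessiot extension of `F`: there is a finite defining
tower of Picard–Vessiot steps from `F` to `E`. -/
def IsIPV (d : K → K) (F E : Subfield K) : Prop :=
  ∃ (n : ℕ) (T : Fin (n + 1) → Subfield K), T 0 = F ∧ T (Fin.last n) = E ∧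
    ∀ i : Fin n, IsPV d (T i.castSucc) (T i.succ)

/-- `E` is a locally iterated Picard–Vessiot extension of `F`: every finite subset
of `E` lies in an iterated Picard–Vessiot subextension. -/
def IsLIPV (d : K → K) (F E : Subfield K) : Prop :=
  F ≤ E ∧ ∀ X : Finset K, ↑X ⊆ (E : Set K) → ∃ M : Subfield K,
    M ≤ E ∧ IsIPV d F M ∧ ↑X ⊆ (M : Set K)

/-- `E₁` is a Picard–Vessiot closure of `E`: a no-new-constants extension in which every
linear homogeneous ODE over `E` has a full set of solutions, generated by such solutions. -/
def IsPVClosure (d : K → K) (E E₁ : Subfield K) : Prop :=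
  E ≤ E₁ ∧ (∀ x ∈ E₁, d x = 0 → x ∈ E) ∧
  (∀ (n : ℕ) (a : Fin n → K), (∀ i, a i ∈ E) → FullSolutionsIn d a E₁) ∧
  E₁ ≤ DiffGen d (↑E ∪ {y | y ∈ E₁ ∧ ∃ (n : ℕ) (a : Fin n → K), (∀ i, a i ∈ E) ∧ IsSol d a y})

/-- A tower of iterated Picard–Vessiot closures `F = F₀ ⊆ F₁ ⊆ F₂ ⊆ ⋯`. -/
def IsPVTower (d : K → K) (Fi : ℕ → Subfield K) : Prop :=
  ∀ i, IsPVClosure d (Fi i) (Fi (i + 1))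

/-- The field of constants is algebraically closed. -/
def ConstAlgClosed (d : K → K) : Prop :=
  ∀ p : Polynomial K, 0 < p.degree → (∀ n, d (p.coeff n) = 0) → ∃ x, d x = 0 ∧ p.eval x = 0

/-- `σ` is a differential automorphism over `F`. -/
def IsDiffAutOver (d : K → K) (F : Subfield K) (σ : K ≃+* K) : Prop :=
  (∀ x, σ (d x) = d (σ x)) ∧ ∀ x ∈ F, σ x = x


section Aux

namespace IsDeriv

variable {K : Type*} [Field K] {d : K → K}

theorem d_zero (hd : IsDeriv d) : d 0 = 0 := by
  have h := hd.map_add 0 0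
  simp only [add_zero] at h
  exact (left_eq_add.mp h)

theorem d_one (hd : IsDeriv d) : d 1 = 0 := by
  have h := hd.leibniz 1 1
  simp only [one_mul, mul_one] at h
  exact (left_eq_add.mp h)

theorem d_neg (hd : IsDeriv d) (a : K) : d (-a) = - d a := by
  have h : d (a + -a) = d a + d (-a) := hd.map_add a (-a)
  rw [add_neg_cancel, hd.d_zero] at h
  exact eq_neg_of_add_eq_zero_right h.symm

theorem d_inv_const (hd : IsDeriv d) {a : K} (ha : d a = 0) : d a⁻¹ = 0 := by
  by_cases h0 : a = 0
  · simp [h0, hd.d_zero]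
  · have h : d (a * a⁻¹) = a * d a⁻¹ + d a * a⁻¹ := hd.leibniz a a⁻¹
    rw [mul_inv_cancel₀ h0, hd.d_one, ha, zero_mul, add_zero] at h
    have := h.symm
    rcases mul_eq_zero.mp this with h | h
    · exact absurd h h0
    · exact h

theorem d_mul_const (hd : IsDeriv d) {a b : K} (ha : d a = 0) (hb : d b = 0) :
    d (a * b) = 0 := by
  rw [hd.leibniz, ha, hb, mul_zero, zero_mul, add_zero]

theorem d_sum (hd : IsDeriv d) {ι : Type*} (s : Finset ι) (f : ι → K) :
    d (∑ i ∈ s, f i) = ∑ i ∈ s, d (f i) := by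
  classical
  induction s using Finset.cons_induction with
  | empty => simpa using hd.d_zero
  | cons a s ha ih => rw [Finset.sum_cons, hd.map_add, ih, Finset.sum_cons]

end IsDeriv

variable {K : Type*} [Field K]

/-- Key lemma A: if a family of solutions of a monic order-`n` ODE admits a nontrivial
`K`-linear relation among all the derivative vectors `(d^[k] w i)_{k<n}`, then it admits a
nontrivial relation with constant coefficients. -/
theorem dep_const {d : K → K} (hd : IsDeriv d) {n m : ℕ} (hn : 0 < n)
    (a : Fin n → K) (w : Fin m → K) (hsol : ∀ i, IsSol d a (w i)) :
    ∀ (N : ℕ) (g : Fin m → K) (s : Finset (Fin m)), s.card ≤ N →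
      (∀ i ∉ s, g i = 0) → (∃ j, g j ≠ 0) →
      (∀ k : Fin n, ∑ i, g i * d^[(k : ℕ)] (w i) = 0) →
      ∃ c : Fin m → K, (∀ i, d (c i) = 0) ∧ (∃ j, c j ≠ 0) ∧ ∑ i, c i * w i = 0 := by
  intro N
  induction N with
  | zero =>
    intro g s hcard hout ⟨j, hj⟩ _
    have hs : s = ∅ := Finset.card_eq_zero.mp (Nat.le_zero.mp hcard)
    exact absurd (hout j (by simp [hs])) hj
  | succ N ih =>
    intro g s hcard hout ⟨j, hj⟩ hrel
    have hjs : j ∈ s := by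
      by_contra h
      exact hj (hout j h)
    -- normalize
    set g' : Fin m → K := fun i => (g j)⁻¹ * g i with hg'
    have hg'j : g' j = 1 := inv_mul_cancel₀ hj
    have rel' : ∀ k : Fin n, ∑ i, g' i * d^[(k : ℕ)] (w i) = 0 := by
      intro k
      have : ∑ i, g' i * d^[(k : ℕ)] (w i)
          = (g j)⁻¹ * ∑ i, g i * d^[(k : ℕ)] (w i) := by
        rw [Finset.mul_sum]
        exact Finset.sum_congr rfl fun i _ => by rw [hg']; ring
      rw [this, hrel k, mul_zero]
    -- relations after one more differentiation step
    have relsucc : ∀ k : ℕ, k < n → ∑ i, g' i * d^[k + 1] (w i) = 0 := by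
      intro k hk
      rcases lt_or_eq_of_le (Nat.succ_le_of_lt hk) with h | h
      · exact rel' ⟨k + 1, h⟩
      · have h' : k + 1 = n := h
        rw [h']
        have hsub : ∀ i, d^[n] (w i) = -∑ l : Fin n, a l * d^[(l : ℕ)] (w i) :=
          fun i => eq_neg_of_add_eq_zero_left (hsol i)
        calc ∑ i, g' i * d^[n] (w i)
            = ∑ i, ∑ l : Fin n, -(a l) * (g' i * d^[(l : ℕ)] (w i)) := by
              refine Finset.sum_congr rfl fun i _ => ?_
              rw [hsub i, mul_neg, Finset.mul_sum, ← Finset.sum_neg_distrib]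
              exact Finset.sum_congr rfl fun l _ => by ring
          _ = ∑ l : Fin n, -(a l) * ∑ i, g' i * d^[(l : ℕ)] (w i) := by
              rw [Finset.sum_comm]
              exact Finset.sum_congr rfl fun l _ => by rw [Finset.mul_sum]
          _ = 0 := Finset.sum_eq_zero fun l _ => by rw [rel' l, mul_zero]
    -- the differentiated relation
    have claim : ∀ k : Fin n, ∑ i, d (g' i) * d^[(k : ℕ)] (w i) = 0 := by
      intro k
      have h0 : d (∑ i, g' i * d^[(k : ℕ)] (w i)) = 0 := by rw [rel' k, hd.d_zero]
      rw [hd.d_sum] at h0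
      have h1 : ∀ i ∈ Finset.univ, d (g' i * d^[(k : ℕ)] (w i))
          = g' i * d^[(k : ℕ) + 1] (w i) + d (g' i) * d^[(k : ℕ)] (w i) := by
        intro i _
        rw [hd.leibniz, ← Function.iterate_succ_apply' d]
      rw [Finset.sum_congr rfl h1, Finset.sum_add_distrib, relsucc _ k.isLt, zero_add] at h0
      exact h0
    by_cases hf : ∀ i, d (g' i) = 0
    · refine ⟨g', hf, ⟨j, by rw [hg'j]; exact one_ne_zero⟩, ?_⟩
      have := rel' ⟨0, hn⟩
      simpa using this
    · push_neg at hf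
      obtain ⟨i₀, hi₀⟩ := hf
      classical
      refine ih (fun i => d (g' i)) (s.erase j) ?_ ?_ ⟨i₀, hi₀⟩ claim
      · rw [Finset.card_erase_of_mem hjs]
        omega
      · intro i hi
        show d (g' i) = 0
        rw [Finset.mem_erase] at hi
        push_neg at hi
        by_cases hij : i = j
        · subst hij
          rw [hg'j, hd.d_one]
        · have hgi : g' i = 0 := by
            rw [hg']
            simp [hout i (hi hij)]
          rw [hgi, hd.d_zero]

/-- Key lemma: any solution of a monic order-`n` ODE is a constant-linear combination of a
full set of `n` solutions. -/
theorem span_of_full {d : K → K} (hd : IsDeriv d) {n : ℕ} (a v : Fin n → K)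
    (hsol : ∀ i, IsSol d a (v i)) (hli : LinIndepConst d v) {y : K} (hy : IsSol d a y) :
    ∃ c : Fin n → K, (∀ i, d (c i) = 0) ∧ y = ∑ i, c i * v i := by
  rcases Nat.eq_zero_or_pos n with hn | hn
  · subst hn
    refine ⟨fun i => i.elim0, fun i => i.elim0, ?_⟩
    have : y = 0 := by simpa [IsSol] using hy
    simpa using this
  · set w : Fin (n + 1) → K := Fin.snoc v y with hw
    have hwl : w (Fin.last n) = y := by simp [hw]
    have hwc : ∀ i : Fin n, w i.castSucc = v i := fun i => by simp [hw]
    have hwsol : ∀ i, IsSol d a (w i) := by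
      intro i
      refine Fin.lastCases ?_ ?_ i
      · rw [hwl]; exact hy
      · intro i; rw [hwc i]; exact hsol i
    have hnli : ¬ LinearIndependent K (fun (i : Fin (n + 1)) (k : Fin n) => d^[(k : ℕ)] (w i)) := by
      intro h
      have h2 := h.fintype_card_le_finrank
      rw [Module.finrank_pi, Fintype.card_fin, Fintype.card_fin] at h2
      omega
    obtain ⟨g, hg, j, hj⟩ := Fintype.not_linearIndependent_iff.mp hnli
    have hrel : ∀ k : Fin n, ∑ i, g i * d^[(k : ℕ)] (w i) = 0 := by
      intro k
      have := congrFun hg k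
      simpa using this
    obtain ⟨c, hc, ⟨j', hj'⟩, hsum⟩ :=
      dep_const hd hn a w hwsol (n + 1 + 1) g Finset.univ (by simp) (by simp) ⟨j, hj⟩ hrel
    rw [Fin.sum_univ_castSucc] at hsum
    simp only [hwl] at hsum
    have hsum2 : (∑ i : Fin n, c i.castSucc * v i) + c (Fin.last n) * y = 0 := by
      rw [← hsum]
      congr 1
      exact Finset.sum_congr rfl fun i _ => by rw [hwc i]
    by_cases hcl : c (Fin.last n) = 0
    · exfalso
      rw [hcl, zero_mul, add_zero] at hsum2
      have hall : ∀ i : Fin n, c i.castSucc = 0 := hli _ (fun i => hc _) hsum2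
      exact hj' (Fin.lastCases hcl hall j')
    · refine ⟨fun i => -(c i.castSucc * (c (Fin.last n))⁻¹), ?_, ?_⟩
      · intro i
        rw [hd.d_neg, hd.d_mul_const (hc _) (hd.d_inv_const (hc _)), neg_zero]
      · have h2 : c (Fin.last n) * y = -∑ i : Fin n, c i.castSucc * v i := by
          have := eq_neg_of_add_eq_zero_left hsum2
          rw [add_comm] at hsum2
          exact eq_neg_of_add_eq_zero_left hsum2
        calc y = (c (Fin.last n))⁻¹ * (c (Fin.last n) * y) := by
                rw [← mul_assoc, inv_mul_cancel₀ hcl, one_mul]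
          _ = (c (Fin.last n))⁻¹ * -∑ i : Fin n, c i.castSucc * v i := by rw [h2]
          _ = ∑ i : Fin n, -(c i.castSucc * (c (Fin.last n))⁻¹) * v i := by
                rw [mul_neg, Finset.mul_sum, ← Finset.sum_neg_distrib]
                exact Finset.sum_congr rfl fun i _ => by ring

end Aux

/-- every differential `F`-embedding of `F_∞` into itself is surjective.
Here the ambient field `Ω` is the complete Picard–Vessiot closure (the union of the
tower is everything). -/
theorem stmt_3 {Ω : Type*} [Field Ω] [CharZero Ω] (D : Ω → Ω) (hD : IsDeriv D)
    (hAC : ConstAlgClosed D) (Fi : ℕ → Subfield Ω) (htow : IsPVTower D Fi)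
    (htop : (⋃ j, (Fi j : Set Ω)) = Set.univ)
    (σ : Ω →+* Ω) (hσd : ∀ x, σ (D x) = D (σ x)) (hσF : ∀ x ∈ Fi 0, σ x = x) :
    Function.Surjective σ := by
  have hmono : Monotone Fi := monotone_nat_of_le_succ fun j => (htow j).1
  have hmem : ∀ x : Ω, ∃ j, x ∈ Fi j := by
    intro x
    have hx : x ∈ ⋃ j, (Fi j : Set Ω) := htop ▸ Set.mem_univ x
    simpa using hx
  -- constants all lie in Fi 0
  have hdesc : ∀ j, ∀ x ∈ Fi j, D x = 0 → x ∈ Fi 0 := by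
    intro j
    induction j with
    | zero => exact fun x hx _ => hx
    | succ j ih => exact fun x hx hdx => ih x ((htow j).2.1 x hx hdx) hdx
  have hσconst : ∀ x : Ω, D x = 0 → σ x = x := by
    intro x hx
    obtain ⟨j, hj⟩ := hmem x
    exact hσF x (hdesc j x hj hx)
  have hσiter : ∀ (k : ℕ) (x : Ω), σ (D^[k] x) = D^[k] (σ x) := by
    intro k
    induction k with
    | zero => intro x; rfl
    | succ k ih =>
      intro x
      rw [Function.iterate_succ_apply', Function.iterate_succ_apply', hσd, ih]
  set R : Subfield Ω := σ.fieldRange with hR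
  have hRD : ∀ x ∈ R, D x ∈ R := by
    intro x hx
    obtain ⟨y, rfl⟩ := RingHom.mem_fieldRange.mp hx
    exact RingHom.mem_fieldRange.mpr ⟨D y, hσd y⟩
  have hgen : ∀ A : Set Ω, A ⊆ (R : Set Ω) → DiffGen D A ≤ R := by
    intro A hA
    rw [DiffGen, Subfield.closure_le]
    intro x hx
    simp only [Set.mem_iUnion, Set.mem_image] at hx
    obtain ⟨k, z, hz, rfl⟩ := hx
    induction k with
    | zero => exact hA hz
    | succ k ih => rw [Function.iterate_succ_apply']; exact hRD _ ih
  have key : ∀ j, Fi j ≤ R := by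
    intro j
    induction j with
    | zero => exact fun x hx => RingHom.mem_fieldRange.mpr ⟨x, hσF x hx⟩
    | succ j ih =>
      refine le_trans (htow j).2.2.2 (hgen _ ?_)
      rintro x (hx | ⟨hxm, n, a, ha, hsolx⟩)
      · exact ih hx
      · -- x solves an ODE with coefficients a over Fi j ⊆ R
        have hb : ∀ i, ∃ b : Ω, σ b = a i :=
          fun i => RingHom.mem_fieldRange.mp (ih (ha i))
        choose b hbσ using hb
        have hbm : ∃ m, ∀ i, b i ∈ Fi m := by
          choose mi hmi using fun i => hmem (b i)
          exact ⟨Finset.univ.sup mi,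
            fun i => hmono (Finset.le_sup (Finset.mem_univ i)) (hmi i)⟩
        obtain ⟨m, hm⟩ := hbm
        obtain ⟨v, hvmem, hvsol, hvli⟩ := (htow m).2.2.1 n b hm
        -- σ ∘ v is a full set of solutions of the ODE a
        have hsolσ : ∀ i, IsSol D a (σ (v i)) := by
          intro i
          have h0 : σ (D^[n] (v i) + ∑ l : Fin n, b l * D^[(l : ℕ)] (v i)) = σ 0 :=
            congrArg σ (hvsol i)
          rw [map_zero, map_add, map_sum] at h0
          show D^[n] (σ (v i)) + ∑ l : Fin n, a l * D^[(l : ℕ)] (σ (v i)) = 0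
          rw [← hσiter n (v i), ← h0]
          congr 1
          exact Finset.sum_congr rfl fun l _ => by
            rw [map_mul, hbσ l, hσiter]
        have hliσ : LinIndepConst D (fun i => σ (v i)) := by
          intro c hc hsum i
          have hcfix : ∀ i, σ (c i) = c i := fun i => hσconst _ (hc i)
          have h0 : σ (∑ i, c i * v i) = 0 := by
            rw [map_sum]
            rw [← hsum]
            exact Finset.sum_congr rfl fun i _ => by rw [map_mul, hcfix i]
          have h1 : ∑ i, c i * v i = 0 := by
            apply σ.injective
            rw [h0, map_zero]
          exact hvli c hc h1 i
        obtain ⟨c, hc, hxeq⟩ := span_of_full hD a (fun i => σ (v i)) hsolσ hliσ hsolx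
        refine RingHom.mem_fieldRange.mpr ⟨∑ i, c i * v i, ?_⟩
        rw [map_sum, hxeq]
        exact Finset.sum_congr rfl fun i _ => by rw [map_mul, hσconst _ (hc i)]
  intro y
  obtain ⟨j, hj⟩ := hmem y
  obtain ⟨x, hx⟩ := RingHom.mem_fieldRange.mp (key j hj)
  exact ⟨x, hx⟩
end

section
/- Every finitely generated differential subfield E of F_∞ containing F is contained in an iterated Picard–Vessiot extension of F inside F_∞. -/
variable {K : Type*} [Field K]

/-!
Call `x` reachable over `F` if every differentially stable iterated Picard–Vessiot extension
of `F` can be enlarged by further Picard–Vessiot steps to one containing `x`; reachable elements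
form a differential subfield. All constants of `Ω` already lie in `F₀`, so adjoining to such an
extension a full system of solutions of an equation with reachable coefficients is a
Picard–Vessiot step, and it contains every solution of that equation: the constant relations
among the solutions are found by taking a linear relation of minimal support among their
Wronskian columns, which differentiation cannot shorten. Hence every `Fᵢ`, and so all of `Ω`,
is reachable, and the finitely many generators of `E` can be adjoined one after another to the
differential field generated by `F₀`.
-/

namespace IsDeriv

variable {d : K → K} (hd : IsDeriv d)
include hd

def toAddMonoidHom : K →+ K := AddMonoidHom.mk' d hd.map_add

lemma map_zero : d 0 = 0 := hd.toAddMonoidHom.map_zero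

lemma map_neg (x : K) : d (-x) = -d x := hd.toAddMonoidHom.map_neg x

lemma map_sum {ι : Type*} (s : Finset ι) (f : ι → K) : d (∑ i ∈ s, f i) = ∑ i ∈ s, d (f i) :=
  _root_.map_sum hd.toAddMonoidHom f s

lemma map_one : d 1 = 0 := by
  have h := hd.leibniz 1 1
  simp only [mul_one, one_mul] at h
  linear_combination -h

lemma map_inv (x : K) : d x⁻¹ = -(d x * x⁻¹ * x⁻¹) := by
  rcases eq_or_ne x 0 with rfl | hx
  · simp [hd.map_zero]
  have h := hd.leibniz x x⁻¹
  rw [mul_inv_cancel₀ hx, hd.map_one] at h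
  linear_combination (-x⁻¹) * h - d x⁻¹ * inv_mul_cancel₀ hx

lemma map_div_eq_zero {a b : K} (ha : d a = 0) (hb : d b = 0) : d (a / b) = 0 := by
  rw [div_eq_mul_inv, hd.leibniz, hd.map_inv, ha, hb]
  ring

theorem exists_ne_zero_forall_map_eq_zero {ι : Type*} [Fintype ι] {R : Submodule K (ι → K)}
    (hR : ∀ c ∈ R, d ∘ c ∈ R) {c : ι → K} (hc : c ∈ R) (hc0 : c ≠ 0) :
    ∃ e ∈ R, e ≠ 0 ∧ ∀ i, d (e i) = 0 := by
  classical
  induction h : (Finset.univ.filter fun i => c i ≠ 0).card using Nat.strong_induction_on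
    generalizing c with
  | _ k ih =>
  obtain ⟨i₀, hi₀⟩ : ∃ i, c i ≠ 0 := Function.ne_iff.1 hc0
  -- normalize so that the coordinate `i₀` is `1`; differentiating then kills it
  set e := (c i₀)⁻¹ • c
  have he : e ∈ R := R.smul_mem _ hc
  have hei₀ : e i₀ = 1 := by simp [e, hi₀]
  by_cases hde : d ∘ e = 0
  · refine ⟨e, he, fun h0 => ?_, fun i => congrFun hde i⟩
    simp [h0] at hei₀
  refine ih _ ?_ (hR e he) hde rfl
  rw [← h]
  apply Finset.card_lt_card
  rw [Finset.ssubset_iff_of_subset]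
  · exact ⟨i₀, by simpa using hi₀, by simp [hei₀, hd.map_one]⟩
  · intro i
    simp only [Finset.mem_filter, Finset.mem_univ, true_and, Function.comp_apply]
    intro hi hci
    simp [e, hci, hd.map_zero] at hi

theorem sum_map_mul_iterate_eq_zero {n : ℕ} {a : Fin n → K} {ι : Type*} [Fintype ι]
    {u : ι → K} (hu : ∀ i, IsSol d a (u i)) {c : ι → K}
    (hc : ∀ m < n, ∑ i, c i * d^[m] (u i) = 0) :
    ∀ m < n, ∑ i, d (c i) * d^[m] (u i) = 0 := by
  have htop : ∑ i, c i * d^[n] (u i) = 0 := by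
    have hsol : ∀ i, d^[n] (u i) = -∑ k : Fin n, a k * d^[k] (u i) := fun i =>
      eq_neg_of_add_eq_zero_left (hu i)
    simp_rw [hsol, mul_neg, Finset.sum_neg_distrib, Finset.mul_sum]
    rw [Finset.sum_comm, neg_eq_zero]
    refine Finset.sum_eq_zero fun k _ => ?_
    simp_rw [mul_left_comm (c _), ← Finset.mul_sum, hc k k.2, mul_zero]
  intro m hm
  have hnext : ∑ i, c i * d^[m + 1] (u i) = 0 := by
    rcases (Nat.add_one_le_of_lt hm).lt_or_eq with h | h
    · exact hc _ h
    · rw [h]; exact htop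
  have hder := congrArg d (hc m hm)
  simp_rw [hd.map_sum, hd.leibniz, Finset.sum_add_distrib, ← Function.iterate_succ_apply' d,
    hnext, zero_add, hd.map_zero] at hder
  exact hder

theorem exists_eq_sum_of_isSol {n : ℕ} {a v : Fin n → K} (hv : ∀ i, IsSol d a (v i))
    (hli : LinIndepConst d v) {y : K} (hy : IsSol d a y) :
    ∃ c : Fin n → K, (∀ i, d (c i) = 0) ∧ y = ∑ i, c i * v i := by
  rcases Nat.eq_zero_or_pos n with rfl | hn
  · exact ⟨0, fun _ => hd.map_zero, by simpa [IsSol] using hy⟩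
  set u : Fin (n + 1) → K := Fin.cons y v
  have hu : ∀ i, IsSol d a (u i) := Fin.cases hy hv
  let W : Fin (n + 1) → Fin n → K := fun i m => d^[m] (u i)
  set R := LinearMap.ker (Fintype.linearCombination K W)
  have mem_R : ∀ c, c ∈ R ↔ ∀ m < n, ∑ i, c i * d^[m] (u i) = 0 := by
    intro c
    simp [R, W, Fintype.linearCombination_apply, funext_iff, Finset.sum_apply, Fin.forall_iff]
  -- `n + 1` vectors in `K^n` are linearly dependent
  obtain ⟨g, hg, hg0⟩ : ∃ g ∈ R, g ≠ 0 := by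
    have hdep : ¬LinearIndependent K W := fun h => by
      simpa using h.fintype_card_le_finrank
    obtain ⟨g, hg, i, hi⟩ := Fintype.not_linearIndependent_iff.1 hdep
    exact ⟨g, by simpa [R, Fintype.linearCombination_apply] using hg, fun h => hi (by simp [h])⟩
  obtain ⟨e, he, he0, hconst⟩ := hd.exists_ne_zero_forall_map_eq_zero
    (fun c hc => (mem_R _).2 (hd.sum_map_mul_iterate_eq_zero hu ((mem_R c).1 hc))) hg hg0
  have hrel : e 0 * y + ∑ j, e j.succ * v j = 0 := by
    simpa [Fin.sum_univ_succ, u] using (mem_R e).1 he 0 hn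
  have he₀ : e 0 ≠ 0 := by
    intro h0
    rw [h0, zero_mul, zero_add] at hrel
    exact he0 (funext <| Fin.cases h0 (hli _ (fun j => hconst _) hrel))
  refine ⟨fun j => -e j.succ / e 0, fun j => hd.map_div_eq_zero (by rw [hd.map_neg, hconst,
    neg_zero]) (hconst 0), ?_⟩
  simp only [neg_div, neg_mul, Finset.sum_neg_distrib, div_mul_eq_mul_div, ← Finset.sum_div]
  field_simp
  linear_combination hrel

end IsDeriv

variable {d : K → K}

lemma DStable.iterate_mem {M : Subfield K} (hM : DStable d M) (k : ℕ) {x : K} (hx : x ∈ M) :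
    d^[k] x ∈ M := by
  induction k with
  | zero => exact hx
  | succ k ih => rw [Function.iterate_succ_apply']; exact hM _ ih

lemma subset_diffGen (A : Set K) : A ⊆ DiffGen d A := fun a ha =>
  Subfield.subset_closure (Set.mem_iUnion.2 ⟨0, a, ha, rfl⟩)

lemma diffGen_le {A : Set K} {M : Subfield K} (hA : A ⊆ M) (hM : DStable d M) :
    DiffGen d A ≤ M := by
  rw [DiffGen, Subfield.closure_le]
  rintro _ ⟨_, ⟨k, rfl⟩, a, ha, rfl⟩
  exact hM.iterate_mem k (hA ha)

lemma dStable_diffGen (hd : IsDeriv d) (A : Set K) : DStable d (DiffGen d A) := by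
  intro x hx
  rw [DiffGen] at hx ⊢
  induction hx using Subfield.closure_induction with
  | mem x hx =>
    obtain ⟨_, ⟨k, rfl⟩, a, ha, rfl⟩ := hx
    exact Subfield.subset_closure
      (Set.mem_iUnion.2 ⟨k + 1, a, ha, Function.iterate_succ_apply' d k a⟩)
  | one => rw [hd.map_one]; exact zero_mem _
  | add x y _ _ hx hy => rw [hd.map_add]; exact add_mem hx hy
  | neg x _ hx => rw [hd.map_neg]; exact neg_mem hx
  | inv x hx' hx =>
    rw [hd.map_inv]
    exact neg_mem (mul_mem (mul_mem hx (inv_mem hx')) (inv_mem hx'))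
  | mul x y hx' hy' hx hy => rw [hd.leibniz]; exact add_mem (mul_mem hx' hy) (mul_mem hx hy')

lemma isPV_diffGen_union {E : Subfield K} (hconst : ∀ x, d x = 0 → x ∈ E) {n : ℕ}
    {a v : Fin n → K} (ha : ∀ i, a i ∈ E) (hv : ∀ i, IsSol d a (v i)) (hli : LinIndepConst d v) :
    IsPV d E (DiffGen d (↑E ∪ Set.range v)) :=
  ⟨fun _ hx => subset_diffGen _ (Or.inl hx), fun x _ hx => hconst x hx, n, a, v, ha,
    fun i => subset_diffGen _ (Or.inr ⟨i, rfl⟩), hv, hli, le_rfl⟩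

lemma isIPV_refl (F : Subfield K) : IsIPV d F F :=
  ⟨0, fun _ => F, rfl, rfl, fun i => i.elim0⟩

lemma IsIPV.le {F E : Subfield K} (h : IsIPV d F E) : F ≤ E := by
  obtain ⟨n, T, h0, hlast, hstep⟩ := h
  have : ∀ i, F ≤ T i := Fin.induction h0.ge fun i hi => hi.trans (hstep i).1
  exact hlast ▸ this (Fin.last n)

lemma IsIPV.trans_isPV {F E M : Subfield K} (h : IsIPV d F E) (hM : IsPV d E M) :
    IsIPV d F M := by
  obtain ⟨n, T, h0, hlast, hstep⟩ := h
  refine ⟨n + 1, Fin.snoc T M, by simpa using h0, Fin.snoc_last _ _, Fin.lastCases ?_ ?_⟩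
  · rwa [Fin.succ_last, Fin.snoc_last, Fin.snoc_castSucc, hlast]
  · intro i
    simpa only [Fin.succ_castSucc, Fin.snoc_castSucc] using hstep i

lemma exists_isIPV_dStable (hd : IsDeriv d) {F : Subfield K} (hconst : ∀ x, d x = 0 → x ∈ F) :
    ∃ M, IsIPV d F M ∧ DStable d M :=
  ⟨_, (isIPV_refl F).trans_isPV (isPV_diffGen_union (a := ![]) (v := ![]) hconst
    (fun i => i.elim0) (fun i => i.elim0) (fun _ _ _ i => i.elim0)), dStable_diffGen hd _⟩

section Reachable

variable (d) (F : Subfield K)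

def IsIPVReachable (x : K) : Prop :=
  ∀ M, IsIPV d F M → DStable d M → ∃ M', M ≤ M' ∧ IsIPV d F M' ∧ DStable d M' ∧ x ∈ M'

variable {d F}

lemma IsIPVReachable.of_mem₂ {x y z : K} (hx : IsIPVReachable d F x)
    (hy : IsIPVReachable d F y) (h : ∀ M : Subfield K, x ∈ M → y ∈ M → z ∈ M) :
    IsIPVReachable d F z := by
  intro M hM hMs
  obtain ⟨M₁, hMM₁, h₁, h₁s, hx₁⟩ := hx M hM hMs
  obtain ⟨M₂, hM₁₂, h₂, h₂s, hy₂⟩ := hy M₁ h₁ h₁s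
  exact ⟨M₂, hMM₁.trans hM₁₂, h₂, h₂s, h M₂ (hM₁₂ hx₁) hy₂⟩

lemma isIPVReachable_of_mem {x : K} (hx : x ∈ F) : IsIPVReachable d F x :=
  fun M hM hMs => ⟨M, le_rfl, hM, hMs, hM.le hx⟩

variable (d F)

def ipvReachable : Subfield K where
  carrier := {x | IsIPVReachable d F x}
  mul_mem' hx hy := hx.of_mem₂ hy fun _ => mul_mem
  one_mem' := isIPVReachable_of_mem (one_mem F)
  add_mem' hx hy := hx.of_mem₂ hy fun _ => add_mem
  zero_mem' := isIPVReachable_of_mem (zero_mem F)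
  neg_mem' hx := hx.of_mem₂ hx fun _ h _ => neg_mem h
  inv_mem' _ hx := hx.of_mem₂ hx fun _ h _ => inv_mem h

variable {d F}

lemma dStable_ipvReachable : DStable d (ipvReachable d F) := by
  intro x hx M hM hMs
  obtain ⟨M', hMM', h', hs', hx'⟩ := hx M hM hMs
  exact ⟨M', hMM', h', hs', hs' x hx'⟩

lemma exists_le_of_subset_ipvReachable {s : Finset K} (hs : ↑s ⊆ (ipvReachable d F : Set K))
    {M : Subfield K} (hM : IsIPV d F M) (hMs : DStable d M) :
    ∃ M', M ≤ M' ∧ IsIPV d F M' ∧ DStable d M' ∧ ↑s ⊆ (M' : Set K) := by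
  classical
  induction s using Finset.induction_on with
  | empty => exact ⟨M, le_rfl, hM, hMs, by simp⟩
  | insert x s _ ih =>
    rw [Finset.coe_insert, Set.insert_subset_iff] at hs
    obtain ⟨M₁, hMM₁, h₁, h₁s, hs₁⟩ := ih hs.2
    obtain ⟨M₂, hM₁₂, h₂, h₂s, hx₂⟩ := hs.1 M₁ h₁ h₁s
    refine ⟨M₂, hMM₁.trans hM₁₂, h₂, h₂s, ?_⟩
    rw [Finset.coe_insert, Set.insert_subset_iff]
    exact ⟨hx₂, hs₁.trans hM₁₂⟩

lemma isSol_mem_ipvReachable (hd : IsDeriv d) (hconst : ∀ x, d x = 0 → x ∈ F) {n : ℕ}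
    {a : Fin n → K} (ha : ∀ i, a i ∈ ipvReachable d F)
    (hfull : ∃ v : Fin n → K, (∀ i, IsSol d a (v i)) ∧ LinIndepConst d v) {y : K}
    (hy : IsSol d a y) : y ∈ ipvReachable d F := by
  classical
  intro M hM hMs
  obtain ⟨M₁, hMM₁, h₁, h₁s, ha₁⟩ :=
    exists_le_of_subset_ipvReachable (s := Finset.univ.image a) (by simpa [Set.range_subset_iff]) hM hMs
  obtain ⟨v, hv, hli⟩ := hfull
  obtain ⟨c, hc, rfl⟩ := hd.exists_eq_sum_of_isSol hv hli hy
  have hconst₁ : ∀ x, d x = 0 → x ∈ M₁ := fun x hx => h₁.le (hconst x hx)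
  have hPV := isPV_diffGen_union hconst₁ (fun i => ha₁ (by simp)) hv hli
  refine ⟨_, hMM₁.trans hPV.1, h₁.trans_isPV hPV, dStable_diffGen hd _, sum_mem fun i _ => ?_⟩
  exact mul_mem (hPV.1 (hconst₁ _ (hc i))) (subset_diffGen _ (Or.inr ⟨i, rfl⟩))

end Reachable

lemma IsPVTower.mem_zero_of_map_eq_zero {Fi : ℕ → Subfield K} (htow : IsPVTower d Fi)
    (htop : (⋃ j, (Fi j : Set K)) = Set.univ) (x : K) (hx : d x = 0) : x ∈ Fi 0 := by
  obtain ⟨j, hj⟩ := Set.mem_iUnion.1 (htop ▸ Set.mem_univ x)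
  induction j with
  | zero => exact hj
  | succ j ih => exact ih ((htow j).2.1 x hj hx)

lemma IsPVTower.le_ipvReachable (hd : IsDeriv d) {Fi : ℕ → Subfield K} (htow : IsPVTower d Fi)
    (hconst : ∀ x, d x = 0 → x ∈ Fi 0) (N : ℕ) : Fi N ≤ ipvReachable d (Fi 0) := by
  induction N with
  | zero => exact fun _ => isIPVReachable_of_mem
  | succ N ih =>
    refine (htow N).2.2.2.trans (diffGen_le ?_ dStable_ipvReachable)
    rintro y (hy | ⟨-, n, a, ha, hy⟩)
    · exact ih hy
    · obtain ⟨v, -, hv, hli⟩ := (htow N).2.2.1 n a ha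
      exact isSol_mem_ipvReachable hd hconst (fun i => ih (ha i)) ⟨v, hv, hli⟩ hy

theorem stmt_5_general {Ω : Type*} [Field Ω] (D : Ω → Ω) (hD : IsDeriv D)
    (Fi : ℕ → Subfield Ω) (htow : IsPVTower D Fi)
    (htop : (⋃ j, (Fi j : Set Ω)) = Set.univ)
    (E : Subfield Ω) (X : Finset Ω) (hE : E = DiffGen D (↑(Fi 0) ∪ ↑X)) :
    ∃ M : Subfield Ω, IsIPV D (Fi 0) M ∧ E ≤ M := by
  have hconst := htow.mem_zero_of_map_eq_zero htop
  have hX : ↑X ⊆ (ipvReachable D (Fi 0) : Set Ω) := fun x _ => by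
    obtain ⟨j, hj⟩ := Set.mem_iUnion.1 (htop ▸ Set.mem_univ x)
    exact htow.le_ipvReachable hD hconst j hj
  obtain ⟨M₀, h₀, h₀s⟩ := exists_isIPV_dStable hD hconst
  obtain ⟨M, -, hM, hMs, hXM⟩ := exists_le_of_subset_ipvReachable hX h₀ h₀s
  exact ⟨M, hM, hE ▸ diffGen_le (Set.union_subset hM.le hXM) hMs⟩

/-- every finitely generated differential subfield of `F_∞` containing `F`
is contained in an iterated Picard–Vessiot extension of `F` (inside `F_∞`). -/
theorem stmt_5 {Ω : Type*} [Field Ω] [CharZero Ω] (D : Ω → Ω) (hD : IsDeriv D)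
    (hAC : ConstAlgClosed D) (Fi : ℕ → Subfield Ω) (htow : IsPVTower D Fi)
    (htop : (⋃ j, (Fi j : Set Ω)) = Set.univ)
    (E : Subfield Ω) (X : Finset Ω) (hE : E = DiffGen D (↑(Fi 0) ∪ ↑X)) :
    ∃ M : Subfield Ω, IsIPV D (Fi 0) M ∧ E ≤ M :=
  stmt_5_general D hD Fi htow htop E X hE
end

section
/- With C = ℂ and W = Map(ℂ,ℂ) ⋊ ℂ as above, the function (f,a) ↦ exp(a) on W, which equals ((exp,0)·X_0 − X_0), does not lie in the polynomial subring ℂ[{X_c : c ∈ ℂ}, Y] of functions on W; hence right translation by (exp, 0) does not preserve this ring. -/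
/-!
Restricting functions on `W` to the subgroup `{(0, a)}` is an algebra homomorphism which sends
`Y` to the identity and every `X_c` to `0`, so it maps `ℂ[{X_c}, Y]` into the polynomial functions
on `ℂ`. The restriction of `(f, a) ↦ exp a` is `exp` itself, which is not a polynomial function:
it has no zero, so the polynomial would be constant, while `exp` is not.
-/

open Polynomial

/-- The underlying set of `W = Map(ℂ, ℂ) ⋊ ℂ`. -/
abbrev WSet := (ℂ → ℂ) × ℂ

/-- The multiplication of `W`: `(f, a)(g, b) = (f + a·g, a + b)` with `(a·g)(x) = g(x + a)`. -/
def wmul (p q : WSet) : WSet := (p.1 + fun x => q.1 (x + p.2), p.2 + q.2)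

/-- The coordinate functions `X_c((f, a)) = f(c)`. -/
def Xc (c : ℂ) : WSet → ℂ := fun p => p.1 c

/-- The coordinate function `Y((f, a)) = a`. -/
def Yc : WSet → ℂ := fun p => p.2

lemma Complex.exp_ne_fun_eval (P : ℂ[X]) : Complex.exp ≠ fun z => P.eval z := by
  intro hP
  have hdeg : P.natDegree = 0 := by
    by_contra hdeg
    obtain ⟨z, hz⟩ := IsAlgClosed.eval_surjective hdeg 0
    exact Complex.exp_ne_zero z ((congrFun hP z).trans hz)
  have h0 := congrFun hP 0
  have hπ := congrFun hP (Real.pi * Complex.I)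
  rw [eq_C_of_natDegree_eq_zero hdeg, eval_C] at h0 hπ
  rw [Complex.exp_zero] at h0
  rw [Complex.exp_pi_mul_I, ← h0] at hπ
  norm_num at hπ

lemma exists_eq_fun_eval_of_mem_adjoin_id {R : Type*} [CommSemiring R] {f : R → R}
    (hf : f ∈ Algebra.adjoin R ({id} : Set (R → R))) : ∃ P : R[X], f = fun a => P.eval a := by
  rw [Algebra.adjoin_singleton_eq_range_aeval] at hf
  obtain ⟨P, rfl⟩ := hf
  exact ⟨P, funext fun a => by simp⟩

/-- `ℂ[{X_c}, Y]`. -/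
abbrev coordAlgebra : Subalgebra ℂ (WSet → ℂ) := Algebra.adjoin ℂ ({Yc} ∪ Set.range Xc)

def restrictZeroFst : (WSet → ℂ) →ₐ[ℂ] (ℂ → ℂ) :=
  AlgHom.pi fun a => Pi.evalAlgHom ℂ (fun _ : WSet => ℂ) (0, a)

lemma coordAlgebra_le_comap_restrictZeroFst :
    coordAlgebra ≤ (Algebra.adjoin ℂ ({id} : Set (ℂ → ℂ))).comap restrictZeroFst := by
  refine Algebra.adjoin_le ?_
  rintro _ (rfl | ⟨c, rfl⟩)
  · exact Algebra.subset_adjoin rfl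
  · have hXc : restrictZeroFst (Xc c) = 0 := funext fun _ => rfl
    simp only [Subalgebra.coe_comap, Set.mem_preimage, hXc, SetLike.mem_coe, zero_mem]

lemma exp_snd_notMem_coordAlgebra : (fun p : WSet => Complex.exp p.2) ∉ coordAlgebra := by
  intro hmem
  obtain ⟨P, hP⟩ :=
    exists_eq_fun_eval_of_mem_adjoin_id (coordAlgebra_le_comap_restrictZeroFst hmem)
  exact Complex.exp_ne_fun_eval P hP

lemma wmul_exp_Xc_zero_sub :
    (fun p : WSet => Xc 0 (wmul p (Complex.exp, 0))) - Xc 0 = fun p => Complex.exp p.2 := by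
  funext p
  simp [Xc, wmul]

/-- the function `(f, a) ↦ exp a` on `W`, which equals the right translate
`(exp, 0) · X_0 − X_0`, does not lie in the polynomial subring `ℂ[{X_c}, Y]` of functions
on `W`; hence right translation by `(exp, 0)` does not preserve this ring. -/
theorem stmt_14 :
    ((fun p : WSet => Xc 0 (wmul p (Complex.exp, 0)) - Xc 0 p) = fun p : WSet => Complex.exp p.2) ∧
    (fun p : WSet => Complex.exp p.2) ∉
      Algebra.adjoin ℂ ({Yc} ∪ Set.range Xc : Set (WSet → ℂ)) ∧
    ¬ (∀ φ ∈ Algebra.adjoin ℂ ({Yc} ∪ Set.range Xc : Set (WSet → ℂ)),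
        (fun p : WSet => φ (wmul p (Complex.exp, 0))) ∈
          Algebra.adjoin ℂ ({Yc} ∪ Set.range Xc : Set (WSet → ℂ))) := by
  refine ⟨wmul_exp_Xc_zero_sub, exp_snd_notMem_coordAlgebra, fun hpreserves => ?_⟩
  have hX0 : Xc 0 ∈ coordAlgebra := Algebra.subset_adjoin (Or.inr ⟨0, rfl⟩)
  have hdiff := sub_mem (hpreserves (Xc 0) hX0) hX0
  rw [wmul_exp_Xc_zero_sub] at hdiff
  exact exp_snd_notMem_coordAlgebra hdiff
end
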